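/- Let a < b and t₀ < t_f be real numbers, let g > 0, and let h̄ : [a,b] → ℝ be continuously differentiable with h̄(x) > 0. Let η, μ, η̂, û : [a,b] × [t₀,t_f] → ℝ be continuously differentiable on the closed rectangle and satisfy the linearized shallow water equations η_t + μ_x = 0 and μ_t + g h̄(x) η_x = 0, the adjoint shallow water equations η̂_t + (g h̄(x) û)_x = 0 and û_t + η̂_x = 0, and the reflecting boundary conditions μ(a,t) = μ(b,t) = 0 and û(a,t) = û(b,t) = 0 for all t ∈ [t₀,t_f]. Then for every t ∈ [t₀,t_f], ∫_a^b [ η̂(x,t) η(x,t) + û(x,t) μ(x,t) ] dx = ∫_a^b [ η̂(x,t_f) η(x,t_f) + û(x,t_f) μ(x,t_f) ] dx. -/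

import Mathlib

/-!
The pairing `P = η̂ η + û μ` obeys the local conservation law `P_t + F_x = 0` with flux
`F = g h̄ û η + η̂ μ = q̂ᵀ A q`: the equations for `(η, μ)` and the adjoint ones for `(η̂, û)`
cancel all other terms. The reflecting boundary conditions make `F` vanish at `x = a, b`, so
integrating `P_t` over `[a,b] × [t, t_f]` in time first and, after Fubini, in space first gives
`∫ P(·, t_f) - ∫ P(·, t) = 0`.
-/

open MeasureTheory Set Function

theorem intervalIntegral.integral_eq_sub_of_hasDerivWithinAt_Icc {E : Type*}
    [NormedAddCommGroup E] [NormedSpace ℝ E] [CompleteSpace E] {f f' : ℝ → E} {a b : ℝ}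
    (hab : a ≤ b) (hf : ∀ x ∈ Icc a b, HasDerivWithinAt f (f' x) (Icc a b) x)
    (hf' : IntervalIntegrable f' volume a b) :
    ∫ x in a..b, f' x = f b - f a :=
  integral_eq_sub_of_hasDerivAt_of_le hab (fun x hx => (hf x hx).continuousWithinAt)
    (fun x hx => (hf x (Ioo_subset_Icc_self hx)).hasDerivAt (Icc_mem_nhds hx.1 hx.2)) hf'

theorem intervalIntegral.integral_integral_swap_of_continuousOn {E : Type*}
    [NormedAddCommGroup E] [NormedSpace ℝ E] {f : ℝ → ℝ → E} {a b c d : ℝ}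
    (hab : a ≤ b) (hcd : c ≤ d) (hf : ContinuousOn (uncurry f) (Icc a b ×ˢ Icc c d)) :
    ∫ x in a..b, ∫ y in c..d, f x y = ∫ y in c..d, ∫ x in a..b, f x y := by
  have hint : Integrable (uncurry f)
      ((volume.restrict (Ioc a b)).prod (volume.restrict (Ioc c d))) := by
    rw [Measure.prod_restrict]
    exact ((hf.integrableOn_compact (isCompact_Icc.prod isCompact_Icc)).mono_set
      (prod_mono Ioc_subset_Icc_self Ioc_subset_Icc_self))
  simp only [intervalIntegral.integral_of_le hab, intervalIntegral.integral_of_le hcd]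
  exact integral_integral_swap hint

theorem integral_eq_integral_of_conservation_law {P F Q : ℝ → ℝ → ℝ} {a b t₀ t₁ : ℝ}
    (hab : a ≤ b) (ht : t₀ ≤ t₁)
    (hP : ∀ x ∈ Icc a b, ∀ s ∈ Icc t₀ t₁, HasDerivWithinAt (P x ·) (Q x s) (Icc t₀ t₁) s)
    (hF : ∀ x ∈ Icc a b, ∀ s ∈ Icc t₀ t₁, HasDerivWithinAt (F · s) (-Q x s) (Icc a b) x)
    (hPc : ContinuousOn (uncurry P) (Icc a b ×ˢ Icc t₀ t₁))
    (hQc : ContinuousOn (uncurry Q) (Icc a b ×ˢ Icc t₀ t₁))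
    (hFab : ∀ s ∈ Icc t₀ t₁, F a s = F b s) :
    ∫ x in a..b, P x t₀ = ∫ x in a..b, P x t₁ := by
  have hslice : ∀ s ∈ Icc t₀ t₁, IntervalIntegrable (P · s) volume a b := fun s hs =>
    (hPc.uncurry_right s hs).intervalIntegrable_of_Icc hab
  have hvanish : ∫ x in a..b, (P x t₁ - P x t₀) = 0 := calc
    ∫ x in a..b, (P x t₁ - P x t₀) = ∫ x in a..b, ∫ s in t₀..t₁, Q x s := by
      refine intervalIntegral.integral_congr fun x hx => ?_
      rw [uIcc_of_le hab] at hx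
      exact (intervalIntegral.integral_eq_sub_of_hasDerivWithinAt_Icc ht (hP x hx)
        ((hQc.uncurry_left x hx).intervalIntegrable_of_Icc ht)).symm
    _ = ∫ s in t₀..t₁, ∫ x in a..b, Q x s :=
      intervalIntegral.integral_integral_swap_of_continuousOn hab ht hQc
    _ = ∫ s in t₀..t₁, (0 : ℝ) := by
      refine intervalIntegral.integral_congr fun s hs => ?_
      rw [uIcc_of_le ht] at hs
      have hFTC := intervalIntegral.integral_eq_sub_of_hasDerivWithinAt_Icc hab
        (fun x hx => hF x hx s hs)
        ((hQc.uncurry_right s hs).neg.intervalIntegrable_of_Icc hab)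
      rw [intervalIntegral.integral_neg, hFab s hs, sub_self, neg_eq_zero] at hFTC
      exact hFTC
    _ = 0 := intervalIntegral.integral_zero
  rw [intervalIntegral.integral_sub (hslice t₁ (right_mem_Icc.2 ht))
    (hslice t₀ (left_mem_Icc.2 ht)), sub_eq_zero] at hvanish
  exact hvanish.symm

theorem hasDerivWithinAt_shallowWater_adjoint_flux {S : Set ℝ} {x : ℝ}
    {c eta mu etaHat uHat : ℝ → ℝ} {etax etat mux mu_t etaHatx etaHatt uHatt : ℝ}
    (heta : HasDerivWithinAt eta etax S x) (hmu : HasDerivWithinAt mu mux S x)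
    (hetaHat : HasDerivWithinAt etaHat etaHatx S x)
    (hcuHat : HasDerivWithinAt (fun y => c y * uHat y) (-etaHatt) S x)
    (hswe1 : etat + mux = 0) (hswe2 : mu_t + c x * etax = 0) (hadj2 : uHatt + etaHatx = 0) :
    HasDerivWithinAt (fun y => c y * uHat y * eta y + etaHat y * mu y)
      (-(etaHatt * eta x + etaHat x * etat + (uHatt * mu x + uHat x * mu_t))) S x :=
  ((hcuHat.fun_mul heta).fun_add (hetaHat.fun_mul hmu)).congr_deriv (by
    linear_combination etaHat x * hswe1 + uHat x * hswe2 + mu x * hadj2)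

theorem shallow_water_adjoint_conservation_general
    (a b t₀ tf g : ℝ) (hab : a < b)
    (hbar hbar' : ℝ → ℝ)
    (eta mu etaHat uHat : ℝ → ℝ → ℝ)
    (etax etat mux mu_t etaHatx etaHatt uHatx uHatt : ℝ → ℝ → ℝ)
    -- h̄ is continuously differentiable and positive on [a,b]
    (hbar_deriv : ∀ x ∈ Icc a b, HasDerivWithinAt hbar (hbar' x) (Icc a b) x)
    -- the partial derivatives of η, μ, η̂, û exist on the rectangle
    (hetax : ∀ x ∈ Icc a b, ∀ t ∈ Icc t₀ tf,
      HasDerivWithinAt (fun x' => eta x' t) (etax x t) (Icc a b) x)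
    (hetat : ∀ x ∈ Icc a b, ∀ t ∈ Icc t₀ tf,
      HasDerivWithinAt (fun t' => eta x t') (etat x t) (Icc t₀ tf) t)
    (hmux : ∀ x ∈ Icc a b, ∀ t ∈ Icc t₀ tf,
      HasDerivWithinAt (fun x' => mu x' t) (mux x t) (Icc a b) x)
    (hmut : ∀ x ∈ Icc a b, ∀ t ∈ Icc t₀ tf,
      HasDerivWithinAt (fun t' => mu x t') (mu_t x t) (Icc t₀ tf) t)
    (hetaHatx : ∀ x ∈ Icc a b, ∀ t ∈ Icc t₀ tf,
      HasDerivWithinAt (fun x' => etaHat x' t) (etaHatx x t) (Icc a b) x)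
    (hetaHatt : ∀ x ∈ Icc a b, ∀ t ∈ Icc t₀ tf,
      HasDerivWithinAt (fun t' => etaHat x t') (etaHatt x t) (Icc t₀ tf) t)
    (huHatx : ∀ x ∈ Icc a b, ∀ t ∈ Icc t₀ tf,
      HasDerivWithinAt (fun x' => uHat x' t) (uHatx x t) (Icc a b) x)
    (huHatt : ∀ x ∈ Icc a b, ∀ t ∈ Icc t₀ tf,
      HasDerivWithinAt (fun t' => uHat x t') (uHatt x t) (Icc t₀ tf) t)
    -- the solutions and their partial derivatives are continuous on the rectangle
    (hetac : ContinuousOn (fun p : ℝ × ℝ => eta p.1 p.2) (Icc a b ×ˢ Icc t₀ tf))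
    (hmuc : ContinuousOn (fun p : ℝ × ℝ => mu p.1 p.2) (Icc a b ×ˢ Icc t₀ tf))
    (hetaHatc : ContinuousOn (fun p : ℝ × ℝ => etaHat p.1 p.2) (Icc a b ×ˢ Icc t₀ tf))
    (huHatc : ContinuousOn (fun p : ℝ × ℝ => uHat p.1 p.2) (Icc a b ×ˢ Icc t₀ tf))
    (hetatc : ContinuousOn (fun p : ℝ × ℝ => etat p.1 p.2) (Icc a b ×ˢ Icc t₀ tf))
    (hmutc : ContinuousOn (fun p : ℝ × ℝ => mu_t p.1 p.2) (Icc a b ×ˢ Icc t₀ tf))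
    (hetaHattc : ContinuousOn (fun p : ℝ × ℝ => etaHatt p.1 p.2) (Icc a b ×ˢ Icc t₀ tf))
    (huHattc : ContinuousOn (fun p : ℝ × ℝ => uHatt p.1 p.2) (Icc a b ×ˢ Icc t₀ tf))
    -- the linearized shallow water equations
    (hswe1 : ∀ x ∈ Icc a b, ∀ t ∈ Icc t₀ tf, etat x t + mux x t = 0)
    (hswe2 : ∀ x ∈ Icc a b, ∀ t ∈ Icc t₀ tf, mu_t x t + g * hbar x * etax x t = 0)
    -- the adjoint shallow water equations
    (hadj1 : ∀ x ∈ Icc a b, ∀ t ∈ Icc t₀ tf,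
      etaHatt x t
        + derivWithin (fun x' => g * hbar x' * uHat x' t) (Icc a b) x = 0)
    (hadj2 : ∀ x ∈ Icc a b, ∀ t ∈ Icc t₀ tf, uHatt x t + etaHatx x t = 0)
    -- reflecting boundary conditions
    (hbc_mu : ∀ t ∈ Icc t₀ tf, mu a t = 0 ∧ mu b t = 0)
    (hbc_uHat : ∀ t ∈ Icc t₀ tf, uHat a t = 0 ∧ uHat b t = 0) :
    ∀ t ∈ Icc t₀ tf,
      ∫ x in a..b, (etaHat x t * eta x t + uHat x t * mu x t)
        = ∫ x in a..b, (etaHat x tf * eta x tf + uHat x tf * mu x tf) := by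
  intro t ⟨ht₀, htf⟩
  have hIcc : Icc t tf ⊆ Icc t₀ tf := Icc_subset_Icc_left ht₀
  have hrect : Icc a b ×ˢ Icc t tf ⊆ Icc a b ×ˢ Icc t₀ tf := prod_mono subset_rfl hIcc
  have hadj : ∀ x ∈ Icc a b, ∀ s ∈ Icc t₀ tf,
      HasDerivWithinAt (fun y => g * hbar y * uHat y s) (-etaHatt x s) (Icc a b) x := by
    intro x hx s hs
    have hdiff :=
      (((hbar_deriv x hx).const_mul g).fun_mul (huHatx x hx s hs)).differentiableWithinAt
    rw [← eq_neg_of_add_eq_zero_right (hadj1 x hx s hs)]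
    exact hdiff.hasDerivWithinAt
  refine integral_eq_integral_of_conservation_law hab.le htf
    (F := fun x s => g * hbar x * uHat x s * eta x s + etaHat x s * mu x s)
    (fun x hx s hs => (((hetaHatt x hx s (hIcc hs)).fun_mul (hetat x hx s (hIcc hs))).fun_add
      ((huHatt x hx s (hIcc hs)).fun_mul (hmut x hx s (hIcc hs)))).mono hIcc)
    (fun x hx s hs => hasDerivWithinAt_shallowWater_adjoint_flux (hetax x hx s (hIcc hs))
      (hmux x hx s (hIcc hs)) (hetaHatx x hx s (hIcc hs)) (hadj x hx s (hIcc hs))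
      (hswe1 x hx s (hIcc hs)) (hswe2 x hx s (hIcc hs)) (hadj2 x hx s (hIcc hs)))
    (((hetaHatc.mul hetac).add (huHatc.mul hmuc)).mono hrect)
    ((((hetaHattc.mul hetac).add (hetaHatc.mul hetatc)).add
      ((huHattc.mul hmuc).add (huHatc.mul hmutc))).mono hrect)
    (fun s hs => by simp [hbc_mu s (hIcc hs), hbc_uHat s (hIcc hs)])

/-- Conservation of the inner product for the linearized 1D shallow water equations:
if `(η, μ)` solves `η_t + μ_x = 0`, `μ_t + g h̄(x) η_x = 0`, `(η̂, û)` solves the adjoint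
equations `η̂_t + (g h̄(x) û)_x = 0`, `û_t + η̂_x = 0` on `[a,b] × [t₀,t_f]` (with `h̄`
continuously differentiable and positive and all solutions continuously differentiable),
and the reflecting boundary conditions `μ = û = 0` hold at `x = a, b`, then
`∫_a^b (η̂ η + û μ) dx` is the same at every `t ∈ [t₀,t_f]` as at `t = t_f`. -/
theorem shallow_water_adjoint_conservation
    (a b t₀ tf g : ℝ) (hab : a < b) (ht : t₀ < tf) (hg : 0 < g)
    (hbar hbar' : ℝ → ℝ)
    (eta mu etaHat uHat : ℝ → ℝ → ℝ)
    (etax etat mux mu_t etaHatx etaHatt uHatx uHatt : ℝ → ℝ → ℝ)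
    -- h̄ is continuously differentiable and positive on [a,b]
    (hbar_pos : ∀ x ∈ Icc a b, 0 < hbar x)
    (hbar_deriv : ∀ x ∈ Icc a b, HasDerivWithinAt hbar (hbar' x) (Icc a b) x)
    (hbar'_cont : ContinuousOn hbar' (Icc a b))
    -- the partial derivatives of η, μ, η̂, û exist on the rectangle
    (hetax : ∀ x ∈ Icc a b, ∀ t ∈ Icc t₀ tf,
      HasDerivWithinAt (fun x' => eta x' t) (etax x t) (Icc a b) x)
    (hetat : ∀ x ∈ Icc a b, ∀ t ∈ Icc t₀ tf,
      HasDerivWithinAt (fun t' => eta x t') (etat x t) (Icc t₀ tf) t)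
    (hmux : ∀ x ∈ Icc a b, ∀ t ∈ Icc t₀ tf,
      HasDerivWithinAt (fun x' => mu x' t) (mux x t) (Icc a b) x)
    (hmut : ∀ x ∈ Icc a b, ∀ t ∈ Icc t₀ tf,
      HasDerivWithinAt (fun t' => mu x t') (mu_t x t) (Icc t₀ tf) t)
    (hetaHatx : ∀ x ∈ Icc a b, ∀ t ∈ Icc t₀ tf,
      HasDerivWithinAt (fun x' => etaHat x' t) (etaHatx x t) (Icc a b) x)
    (hetaHatt : ∀ x ∈ Icc a b, ∀ t ∈ Icc t₀ tf,
      HasDerivWithinAt (fun t' => etaHat x t') (etaHatt x t) (Icc t₀ tf) t)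
    (huHatx : ∀ x ∈ Icc a b, ∀ t ∈ Icc t₀ tf,
      HasDerivWithinAt (fun x' => uHat x' t) (uHatx x t) (Icc a b) x)
    (huHatt : ∀ x ∈ Icc a b, ∀ t ∈ Icc t₀ tf,
      HasDerivWithinAt (fun t' => uHat x t') (uHatt x t) (Icc t₀ tf) t)
    -- the solutions and their partial derivatives are continuous on the rectangle
    (hetac : ContinuousOn (fun p : ℝ × ℝ => eta p.1 p.2) (Icc a b ×ˢ Icc t₀ tf))
    (hmuc : ContinuousOn (fun p : ℝ × ℝ => mu p.1 p.2) (Icc a b ×ˢ Icc t₀ tf))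
    (hetaHatc : ContinuousOn (fun p : ℝ × ℝ => etaHat p.1 p.2) (Icc a b ×ˢ Icc t₀ tf))
    (huHatc : ContinuousOn (fun p : ℝ × ℝ => uHat p.1 p.2) (Icc a b ×ˢ Icc t₀ tf))
    (hetaxc : ContinuousOn (fun p : ℝ × ℝ => etax p.1 p.2) (Icc a b ×ˢ Icc t₀ tf))
    (hetatc : ContinuousOn (fun p : ℝ × ℝ => etat p.1 p.2) (Icc a b ×ˢ Icc t₀ tf))
    (hmuxc : ContinuousOn (fun p : ℝ × ℝ => mux p.1 p.2) (Icc a b ×ˢ Icc t₀ tf))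
    (hmutc : ContinuousOn (fun p : ℝ × ℝ => mu_t p.1 p.2) (Icc a b ×ˢ Icc t₀ tf))
    (hetaHatxc : ContinuousOn (fun p : ℝ × ℝ => etaHatx p.1 p.2) (Icc a b ×ˢ Icc t₀ tf))
    (hetaHattc : ContinuousOn (fun p : ℝ × ℝ => etaHatt p.1 p.2) (Icc a b ×ˢ Icc t₀ tf))
    (huHatxc : ContinuousOn (fun p : ℝ × ℝ => uHatx p.1 p.2) (Icc a b ×ˢ Icc t₀ tf))
    (huHattc : ContinuousOn (fun p : ℝ × ℝ => uHatt p.1 p.2) (Icc a b ×ˢ Icc t₀ tf))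
    -- the linearized shallow water equations
    (hswe1 : ∀ x ∈ Icc a b, ∀ t ∈ Icc t₀ tf, etat x t + mux x t = 0)
    (hswe2 : ∀ x ∈ Icc a b, ∀ t ∈ Icc t₀ tf, mu_t x t + g * hbar x * etax x t = 0)
    -- the adjoint shallow water equations
    (hadj1 : ∀ x ∈ Icc a b, ∀ t ∈ Icc t₀ tf,
      etaHatt x t
        + derivWithin (fun x' => g * hbar x' * uHat x' t) (Icc a b) x = 0)
    (hadj2 : ∀ x ∈ Icc a b, ∀ t ∈ Icc t₀ tf, uHatt x t + etaHatx x t = 0)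
    -- reflecting boundary conditions
    (hbc_mu : ∀ t ∈ Icc t₀ tf, mu a t = 0 ∧ mu b t = 0)
    (hbc_uHat : ∀ t ∈ Icc t₀ tf, uHat a t = 0 ∧ uHat b t = 0) :
    ∀ t ∈ Icc t₀ tf,
      ∫ x in a..b, (etaHat x t * eta x t + uHat x t * mu x t)
        = ∫ x in a..b, (etaHat x tf * eta x tf + uHat x tf * mu x tf) :=
  shallow_water_adjoint_conservation_general a b t₀ tf g hab hbar hbar' eta mu etaHat uHat etax etat
    mux mu_t etaHatx etaHatt uHatx uHatt hbar_deriv hetax hetat hmux hmut hetaHatx hetaHatt huHatx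
    huHatt hetac hmuc hetaHatc huHatc hetatc hmutc hetaHattc huHattc hswe1 hswe2 hadj1 hadj2 hbc_mu
    hbc_uHat
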